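/- arXiv:2304.02783 — 3 statements merged into one kernel-verified Lean document; each statement's English description precedes it below -/
import Mathlib

section
/- For u_n = Σ_{k=1}^{n} Ẽ_{kk} in B(ℓ² ⊗ ℂ²) (where Ẽ_{kk} = E_{kk} ⊗ [[1,k],[0,0]]), the operator norm of u_n equals √(1+n²), while the norm of E₁₁ + ⋯ + E_{nn} in B(ℓ²) equals 1. In particular, the map Ẽ_{ij} ↦ E_{ij} is not bounded below. -/
open Matrix Kronecker

/-- `Ẽ_{kk} = E_{kk} ⊗ [[1, k],[0,0]]` via the Kronecker product, with `k : Fin n`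
interpreted as the natural number `k + 1`. -/
def Etilde (N : ℕ) (i j : Fin N) : Matrix (Fin N × Fin 2) (Fin N × Fin 2) ℂ :=
  (single i j (1 : ℂ)) ⊗ₖ !![1, ((j : ℕ) + 1 : ℂ); 0, 0]

/-!
By the C*-identity, `‖u_n‖² = ‖u_n u_n*‖`. Since the `E_{kk}` are orthogonal projections,
`u_n u_n* = Σ_k E_{kk} ⊗ [[1, k],[0,0]] [[1, k],[0,0]]* = Σ_k E_{kk} ⊗ diag(1 + k², 0)`, a diagonal
matrix whose largest entry is `1 + n²`. On the other hand `E₁₁ + ⋯ + E_{nn}` is the identity.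
-/

namespace Matrix

variable {ι m R : Type*} [Fintype ι] [DecidableEq ι]

theorem sum_single_kronecker_mul_conjTranspose [Fintype m] [CommSemiring R] [StarRing R]
    (A : ι → Matrix m m R) :
    (∑ k, single k k (1 : R) ⊗ₖ A k) * (∑ k, single k k (1 : R) ⊗ₖ A k)ᴴ =
      ∑ k, single k k (1 : R) ⊗ₖ (A k * (A k)ᴴ) := by
  rw [conjTranspose_sum, Finset.sum_mul_sum]
  refine Finset.sum_congr rfl fun k _ => ?_
  rw [Finset.sum_eq_single k]
  · rw [conjTranspose_kronecker, ← mul_kronecker_mul]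
    simp
  · intro l _ hlk
    rw [conjTranspose_kronecker, ← mul_kronecker_mul, conjTranspose_single,
      single_mul_single_of_ne (h := hlk.symm), zero_kronecker]
  · simp

theorem sum_single_kronecker_diagonal [DecidableEq m] [NonAssocSemiring R] (v : ι → m → R) :
    ∑ k, single k k (1 : R) ⊗ₖ diagonal (v k) = diagonal fun p => v p.1 p.2 := by
  simp_rw [← diagonal_single, diagonal_kronecker_diagonal]
  ext ⟨i, a⟩ ⟨j, b⟩
  simp [Matrix.sum_apply, diagonal_apply, Pi.single_apply]

theorem fin_two_topRow_mul_conjTranspose [CommSemiring R] [StarRing R] (c : R) :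
    !![1, c; 0, 0] * (!![1, c; 0, 0])ᴴ = diagonal ![1 + c * star c, 0] := by
  ext i j
  fin_cases i <;> fin_cases j <;> simp [mul_apply, Fin.sum_univ_two]

end Matrix

def etildeGramDiagonal (n : ℕ) (p : Fin n × Fin 2) : ℂ :=
  ((![1 + ((p.1 : ℕ) + 1) ^ 2, 0] p.2 : ℕ) : ℂ)

theorem sum_etilde_mul_conjTranspose (n : ℕ) :
    (∑ k : Fin n, Etilde n k k) * (∑ k : Fin n, Etilde n k k)ᴴ =
      diagonal (etildeGramDiagonal n) := by
  simp only [Etilde, sum_single_kronecker_mul_conjTranspose, fin_two_topRow_mul_conjTranspose,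
    sum_single_kronecker_diagonal]
  congr 1
  ext ⟨i, s⟩
  fin_cases s <;> simp [etildeGramDiagonal, sq]

theorem norm_etildeGramDiagonal {n : ℕ} (hn : 1 ≤ n) :
    ‖etildeGramDiagonal n‖ = 1 + (n : ℝ) ^ 2 := by
  refine le_antisymm ((pi_norm_le_iff_of_nonneg (by positivity)).2 fun ⟨i, s⟩ => ?_) ?_
  · fin_cases s
    · simp only [etildeGramDiagonal, Fin.zero_eta, cons_val_zero, Complex.norm_natCast]
      push_cast
      gcongr
      exact_mod_cast i.2
    · simp only [etildeGramDiagonal, Fin.mk_one, cons_val_one, cons_val_fin_one, CharP.cast_eq_zero,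
        norm_zero]
      positivity
  · have hlast := norm_le_pi_norm (etildeGramDiagonal n) (⟨n - 1, by omega⟩, 0)
    rw [etildeGramDiagonal, cons_val_zero, Complex.norm_natCast, Nat.sub_add_cancel hn] at hlast
    exact_mod_cast hlast

open scoped Matrix.Norms.L2Operator

/-- The operator norm of `u_n = Σ_{k=1}^n Ẽ_{kk}` equals `√(1+n²)`, while the norm of
`E₁₁ + ⋯ + E_{nn}` equals `1`; in particular the map `Ẽ_{ij} ↦ E_{ij}` is not bounded
below. -/
theorem stmt_7 (n : ℕ) (hn : 1 ≤ n) :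
    ‖Matrix.toEuclideanCLM (𝕜 := ℂ) (n := Fin n × Fin 2) (∑ k : Fin n, Etilde n k k)‖ =
      Real.sqrt (1 + (n : ℝ) ^ 2) ∧
    ‖Matrix.toEuclideanCLM (𝕜 := ℂ) (n := Fin n)
        (∑ k : Fin n, single k k (1 : ℂ))‖ = 1 := by
  have : Nonempty (Fin n) := ⟨⟨0, hn⟩⟩
  refine ⟨?_, by rw [sum_single_one, l2_opNorm_toEuclideanCLM, CStarRing.norm_one]⟩
  rw [l2_opNorm_toEuclideanCLM, ← Real.sqrt_mul_self (norm_nonneg _),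
    ← CStarRing.norm_self_mul_star, star_eq_conjTranspose, sum_etilde_mul_conjTranspose,
    l2_opNorm_diagonal, norm_etildeGramDiagonal hn]
end

section
/- If C and B are commuting C*-subalgebras of B(H) and B is simple, then the multiplication map μ : C ⊙ B → B(H), c ⊗ b ↦ cb (defined on the algebraic tensor product) is injective. -/
/-!
The operators on `B(H)` of the form `x ↦ ∑ aᵢ x bᵢ` with `aᵢ, bᵢ ∈ B` commute with left
multiplication by elements of `C`. A complex Banach algebra without nontrivial closed ideals is
simple as a ring and, by Gelfand–Mazur, has centre `ℂ`. For such a `B`, an Artin–Whaples argument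
produces, for linearly independent `b₁, …, bₙ ∈ B`, operators of this form with `Tᵢ bⱼ = δᵢⱼ`.
Applying `Tᵢ` to `∑ cⱼ bⱼ = 0` with `cⱼ ∈ C` gives `cᵢ = 0`; expanding a tensor in a basis of `B`
then shows that `μ` is injective.
-/

open scoped TensorProduct

namespace TwoSidedIdeal

variable {R : Type*} [Ring R] [TopologicalSpace R] [IsTopologicalRing R]

def topologicalClosure (I : TwoSidedIdeal R) : TwoSidedIdeal R :=
  .mk' (closure (I : Set R)) (subset_closure I.zero_mem)
    (fun hx hy => map_mem_closure₂ continuous_add hx hy fun _ ha _ hb => I.add_mem ha hb)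
    (fun hx => map_mem_closure continuous_neg hx fun _ ha => I.neg_mem ha)
    (fun hy => map_mem_closure (continuous_const_mul _) hy fun _ hb => I.mul_mem_left _ _ hb)
    (fun {_ y} hx => map_mem_closure (f := (· * y)) (continuous_mul_const y) hx
      fun _ ha => I.mul_mem_right _ y ha)

@[simp]
theorem coe_topologicalClosure (I : TwoSidedIdeal R) :
    (I.topologicalClosure : Set R) = closure I := by
  ext x; exact mem_mk' _ _ _ _ _ _ x

theorem isClosed_topologicalClosure (I : TwoSidedIdeal R) :
    IsClosed (I.topologicalClosure : Set R) := by
  simp [isClosed_closure]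

theorem le_topologicalClosure (I : TwoSidedIdeal R) : I ≤ I.topologicalClosure :=
  SetLike.coe_subset_coe.1 (by simp [subset_closure])

end TwoSidedIdeal

/- A proper ideal has proper closure, since it avoids the open ball of units around `1`. -/
theorem IsSimpleRing.of_isClosed_eq_bot_or_eq_top {R : Type*} [NormedRing R] [CompleteSpace R]
    [Nontrivial R] (h : ∀ I : TwoSidedIdeal R, IsClosed (I : Set R) → I = ⊥ ∨ I = ⊤) :
    IsSimpleRing R := by
  refine .of_eq_bot_or_eq_top fun I => or_iff_not_imp_left.2 fun hI => ?_
  have hclosure : I.topologicalClosure = ⊤ :=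
    (h _ I.isClosed_topologicalClosure).resolve_left fun hbot =>
      hI (eq_bot_iff.2 (hbot ▸ I.le_topologicalClosure))
  have h1 : (1 : R) ∈ closure (I : Set R) := by
    rw [← I.coe_topologicalClosure, hclosure]; trivial
  obtain ⟨u, hu, hnorm⟩ := Metric.mem_closure_iff.1 h1 1 one_pos
  rw [dist_eq_norm] at hnorm
  rw [← I.one_mem_iff, ← TwoSidedIdeal.mem_asIdeal,
    Ideal.eq_top_of_norm_lt_one I.asIdeal (TwoSidedIdeal.mem_asIdeal.2 hu) hnorm]
  trivial

/- For `k` in the spectrum of a central `z`, `z - k` is a non-unit of the centre, which is a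
field. -/
theorem Algebra.IsCentral.complex_of_isSimpleRing {R : Type*} [NormedRing R] [NormedAlgebra ℂ R]
    [CompleteSpace R] [IsSimpleRing R] : Algebra.IsCentral ℂ R where
  out z hz := by
    obtain ⟨k, hk⟩ := spectrum.nonempty z
    rw [Algebra.mem_bot]
    refine ⟨k, sub_eq_zero.1 ?_⟩
    by_contra hne
    have hcenter : algebraMap ℂ R k - z ∈ Subring.center R :=
      sub_mem (Set.algebraMap_mem_center k) hz
    obtain ⟨w, hw⟩ := (IsSimpleRing.isField_center R).mul_inv_cancel
      (a := ⟨_, hcenter⟩) (by simpa [Subtype.ext_iff] using hne)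
    exact hk ((IsUnit.of_mul_eq_one w hw).map (Subring.center R).subtype)

namespace Subalgebra

variable {K A : Type*} [CommRing K] [Ring A] [Algebra K A] (B : Subalgebra K A)

def elementaryOperators : Subalgebra K (Module.End K A) :=
  Algebra.adjoin K (Set.range (fun b : B => LinearMap.mulLeft K (b : A)) ∪
    Set.range (fun b : B => LinearMap.mulRight K (b : A)))

variable {B}

theorem mulLeft_mem_elementaryOperators {b : A} (hb : b ∈ B) :
    LinearMap.mulLeft K b ∈ B.elementaryOperators :=
  Algebra.subset_adjoin (Or.inl ⟨⟨b, hb⟩, rfl⟩)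

theorem mulRight_mem_elementaryOperators {b : A} (hb : b ∈ B) :
    LinearMap.mulRight K b ∈ B.elementaryOperators :=
  Algebra.subset_adjoin (Or.inr ⟨⟨b, hb⟩, rfl⟩)

theorem apply_mem_of_mem_elementaryOperators {T : Module.End K A}
    (hT : T ∈ B.elementaryOperators) {x : A} (hx : x ∈ B) : T x ∈ B := by
  induction hT using Algebra.adjoin_induction generalizing x with
  | mem T hT =>
    obtain ⟨⟨b, hb⟩, rfl⟩ | ⟨⟨b, hb⟩, rfl⟩ := hT
    exacts [mul_mem hb hx, mul_mem hx hb]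
  | algebraMap k => exact B.smul_mem hx k
  | add S T _ _ hS hT => exact add_mem (hS hx) (hT hx)
  | mul S T _ _ hS hT => exact hS (hT hx)

theorem apply_mul_of_mem_elementaryOperators {T : Module.End K A}
    (hT : T ∈ B.elementaryOperators) {c : A} (hc : ∀ b ∈ B, Commute c b) (x : A) :
    T (c * x) = c * T x := by
  suffices B.elementaryOperators ≤ Subalgebra.centralizer K {LinearMap.mulLeft K c} from
    (LinearMap.congr_fun ((this hT) _ rfl) x).symm
  refine Algebra.adjoin_le ?_
  rintro _ (⟨⟨b, hb⟩, rfl⟩ | ⟨⟨b, hb⟩, rfl⟩) _ rfl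
  · ext x
    simp [← mul_assoc, (hc b hb).eq]
  · ext x
    simp [mul_assoc]

theorem exists_mem_elementaryOperators_apply_eq_one [IsSimpleRing B] {y : A} (hy : y ∈ B)
    (hy0 : y ≠ 0) : ∃ T ∈ B.elementaryOperators, T y = 1 := by
  let I : TwoSidedIdeal B := .mk' {x | ∃ T ∈ B.elementaryOperators, T y = x}
    ⟨0, zero_mem _, rfl⟩
    (fun ⟨S, hS, hSy⟩ ⟨T, hT, hTy⟩ => ⟨S + T, add_mem hS hT, by simp [hSy, hTy]⟩)
    (fun ⟨T, hT, hTy⟩ => ⟨-T, neg_mem hT, by simp [hTy]⟩)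
    (fun {b _} ⟨T, hT, hTy⟩ =>
      ⟨_, mul_mem (mulLeft_mem_elementaryOperators b.2) hT, by simp [hTy]⟩)
    (fun {_ b} ⟨T, hT, hTy⟩ =>
      ⟨_, mul_mem (mulRight_mem_elementaryOperators b.2) hT, by simp [hTy]⟩)
  have hyI : (⟨y, hy⟩ : B) ∈ I := (TwoSidedIdeal.mem_mk' ..).2 ⟨1, one_mem _, rfl⟩
  obtain ⟨T, hT, hTy⟩ := (TwoSidedIdeal.mem_mk' ..).1
    (IsSimpleRing.one_mem_of_ne_zero_mem I (by simpa [Subtype.ext_iff] using hy0) hyI)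
  exact ⟨T, hT, hTy⟩

section Field

variable {K A : Type*} [Field K] [Ring A] [Algebra K A] {B : Subalgebra K A}
  [Algebra.IsCentral K B] {ι : Type*} {b : ι → A}

/- If every such operator killed `b a` as well, then, with `δ i` the dual operators of `s`, each
`δ i (b a)` would commute with `B` (test the operator `x δ i - δ i x`), hence be a scalar `k i`,
and `1 - ∑ i, b i δ i` would exhibit `b a = ∑ i, k i • b i`. -/
theorem exists_mem_elementaryOperators_apply_ne_zero (hb : LinearIndependent K b)
    (hbB : ∀ i, b i ∈ B) {s : Finset ι} {a : ι} (ha : a ∉ s)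
    (hdual : ∀ i ∈ s, ∃ T ∈ B.elementaryOperators, T (b i) = 1 ∧ ∀ j ∈ s, j ≠ i → T (b j) = 0) :
    ∃ T ∈ B.elementaryOperators, (∀ j ∈ s, T (b j) = 0) ∧ T (b a) ≠ 0 := by
  classical
  by_contra! h
  choose! δ hδ hδ1 hδ0 using hdual
  have hscalar : ∀ i ∈ s, ∃ k : K, δ i (b a) = algebraMap K A k := by
    intro i hi
    have hcenter : (⟨δ i (b a), apply_mem_of_mem_elementaryOperators (hδ i hi) (hbB a)⟩ : B) ∈
        Subalgebra.center K B := by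
      refine Subalgebra.mem_center_iff.2 fun ⟨x, hx⟩ => Subtype.ext ?_
      have hcomm := h (LinearMap.mulLeft K x * δ i - LinearMap.mulRight K x * δ i)
        (sub_mem (mul_mem (mulLeft_mem_elementaryOperators hx) (hδ i hi))
          (mul_mem (mulRight_mem_elementaryOperators hx) (hδ i hi)))
        fun j hj => by
          obtain rfl | hji := eq_or_ne j i
          · simp [hδ1 j hj]
          · simp [hδ0 i hi j hj hji]
      simpa [sub_eq_zero] using hcomm
    obtain ⟨k, hk⟩ := (Algebra.IsCentral.mem_center_iff K).1 hcenter
    exact ⟨k, congr(($hk : A))⟩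
  choose! k hk using hscalar
  have hspan := h (1 - ∑ i ∈ s, LinearMap.mulLeft K (b i) * δ i)
    (sub_mem (one_mem _) (sum_mem fun i hi =>
      mul_mem (mulLeft_mem_elementaryOperators (hbB i)) (hδ i hi)))
    fun j hj => by
      rw [LinearMap.sub_apply, LinearMap.sum_apply, Finset.sum_eq_single j
        (fun i hi hij => by simp [hδ0 i hi j hj hij.symm]) (absurd hj)]
      simp [hδ1 j hj]
  refine hb.notMem_span_image (s := s) ha ?_
  rw [LinearMap.sub_apply, LinearMap.sum_apply, sub_eq_zero, Module.End.one_apply] at hspan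
  rw [hspan]
  refine Submodule.sum_mem _ fun i hi => ?_
  rw [Module.End.mul_apply, LinearMap.mulLeft_apply, hk i hi, ← Algebra.commutes,
    ← Algebra.smul_def]
  exact Submodule.smul_mem _ _ (Submodule.subset_span ⟨i, hi, rfl⟩)

variable [IsSimpleRing B]

theorem exists_mem_elementaryOperators_dual (hb : LinearIndependent K b) (hbB : ∀ i, b i ∈ B)
    (s : Finset ι) :
    ∀ i ∈ s, ∃ T ∈ B.elementaryOperators, T (b i) = 1 ∧ ∀ j ∈ s, j ≠ i → T (b j) = 0 := by
  classical
  induction s using Finset.induction_on with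
  | empty => simp
  | insert a s ha ih =>
    obtain ⟨T, hT, hTs, hTa⟩ := exists_mem_elementaryOperators_apply_ne_zero hb hbB ha ih
    obtain ⟨S, hS, hSa⟩ := exists_mem_elementaryOperators_apply_eq_one
      (apply_mem_of_mem_elementaryOperators hT (hbB a)) hTa
    have hST : ∀ j ∈ s, (S * T) (b j) = 0 := fun j hj => by simp [hTs j hj]
    intro i hi
    obtain rfl | hi := Finset.mem_insert.1 hi
    · refine ⟨S * T, mul_mem hS hT, hSa, fun j hj hji => ?_⟩
      exact hST j ((Finset.mem_insert.1 hj).resolve_left hji)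
    · obtain ⟨R, hR, hR1, hR0⟩ := ih i hi
      refine ⟨R - LinearMap.mulLeft K (R (b a)) * (S * T), sub_mem hR (mul_mem
        (mulLeft_mem_elementaryOperators (apply_mem_of_mem_elementaryOperators hR (hbB a)))
        (mul_mem hS hT)), by simp [hR1, hST i hi], fun j hj hji => ?_⟩
      obtain rfl | hj := Finset.mem_insert.1 hj
      · simp [hSa]
      · simp [hR0 j hj hji, hST j hj]

theorem eq_zero_of_sum_mul_eq_zero (hb : LinearIndependent K b) (hbB : ∀ i, b i ∈ B)
    {c : ι → A} (hc : ∀ i, ∀ x ∈ B, Commute (c i) x) {s : Finset ι}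
    (h : ∑ i ∈ s, c i * b i = 0) : ∀ i ∈ s, c i = 0 := by
  intro i hi
  obtain ⟨T, hT, hT1, hT0⟩ := exists_mem_elementaryOperators_dual hb hbB s i hi
  have hTc : ∀ j, T (c j * b j) = c j * T (b j) :=
    fun j => apply_mul_of_mem_elementaryOperators hT (hc j) (b j)
  calc c i = T (∑ j ∈ s, c j * b j) := by
        rw [map_sum, Finset.sum_eq_single i (fun j hj hji => by rw [hTc, hT0 j hj hji, mul_zero])
          (absurd hi), hTc, hT1, mul_one]
    _ = 0 := by rw [h, map_zero]

open TensorProduct in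
theorem injective_of_tmul_eq_mul {M : Type*} [AddCommGroup M] [Module K M]
    {φ : M →ₗ[K] A} (hφ : Function.Injective φ) (hcomm : ∀ m, ∀ x ∈ B, Commute (φ m) x)
    {μ : M ⊗[K] B →ₗ[K] A} (hμ : ∀ m (b : B), μ (m ⊗ₜ b) = φ m * b) :
    Function.Injective μ := by
  classical
  let 𝒷 := Module.Basis.ofVectorSpace K B
  refine (injective_iff_map_eq_zero μ).2 fun t ht => ?_
  obtain ⟨f, rfl⟩ := (equivFinsuppOfBasisRight 𝒷).symm.surjective t
  rw [equivFinsuppOfBasisRight_symm_apply, map_finsuppSum] at ht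
  simp only [hμ] at ht
  have hf := eq_zero_of_sum_mul_eq_zero (𝒷.linearIndependent.map' B.val.toLinearMap
    (LinearMap.ker_eq_bot.2 Subtype.val_injective)) (fun i => (𝒷 i).2) (fun i => hcomm (f i)) ht
  have : f = 0 := Finsupp.ext fun i => by
    by_cases hi : i ∈ f.support
    · exact hφ (by simpa using hf i hi)
    · exact Finsupp.notMem_support_iff.1 hi
  rw [this, map_zero]

end Field

end Subalgebra

theorem stmt_8_general {H : Type*} [NormedAddCommGroup H] [InnerProductSpace ℂ H]
    [CompleteSpace H]
    (C B : StarSubalgebra ℂ (H →L[ℂ] H))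
    (hBclosed : IsClosed (B : Set (H →L[ℂ] H)))
    (hcomm : ∀ c ∈ C, ∀ b ∈ B, c * b = b * c)
    (hsimple : ∀ I : TwoSidedIdeal B, IsClosed (I : Set B) → I = ⊥ ∨ I = ⊤)
    (μ : (↥C ⊗[ℂ] ↥B) →ₗ[ℂ] (H →L[ℂ] H))
    (hμ : ∀ (c : C) (b : B), μ (c ⊗ₜ[ℂ] b) = (c : H →L[ℂ] H) * (b : H →L[ℂ] H)) :
    Function.Injective μ := by
  rcases subsingleton_or_nontrivial B with _ | _
  · exact Function.injective_of_subsingleton μ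
  have : CompleteSpace B := hBclosed.completeSpace_coe
  have : IsSimpleRing B.toSubalgebra := IsSimpleRing.of_isClosed_eq_bot_or_eq_top hsimple
  have : Algebra.IsCentral ℂ B.toSubalgebra := Algebra.IsCentral.complex_of_isSimpleRing
  exact Subalgebra.injective_of_tmul_eq_mul (φ := C.toSubalgebra.val.toLinearMap)
    Subtype.val_injective (fun c x hx => hcomm _ c.2 x hx) hμ

/-- If `C` and `B` are commuting C*-subalgebras of `B(H)` and `B` is simple (its only
closed two-sided ideals are `0` and `B`), then the multiplication map
`μ : C ⊙ B → B(H)`, `c ⊗ b ↦ c·b`, on the algebraic tensor product is injective. -/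
theorem stmt_8 {H : Type*} [NormedAddCommGroup H] [InnerProductSpace ℂ H]
    [CompleteSpace H]
    (C B : StarSubalgebra ℂ (H →L[ℂ] H))
    (hCclosed : IsClosed (C : Set (H →L[ℂ] H)))
    (hBclosed : IsClosed (B : Set (H →L[ℂ] H)))
    (hcomm : ∀ c ∈ C, ∀ b ∈ B, c * b = b * c)
    (hsimple : ∀ I : TwoSidedIdeal B, IsClosed (I : Set B) → I = ⊥ ∨ I = ⊤)
    (μ : (↥C ⊗[ℂ] ↥B) →ₗ[ℂ] (H →L[ℂ] H))
    (hμ : ∀ (c : C) (b : B), μ (c ⊗ₜ[ℂ] b) = (c : H →L[ℂ] H) * (b : H →L[ℂ] H)) :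
    Function.Injective μ :=
  stmt_8_general C B hBclosed hcomm hsimple μ hμ
end

section
/- If M ⊆ B(H) is a factor (a von Neumann algebra with M ∩ M' = ℂ·1), then the multiplication map M' ⊙ M → B(H), a ⊗ b ↦ ab, on the algebraic tensor product is injective. -/
/-!
Let `S` be the monoid of products `m * m'` (`m ∈ M`, `m' ∈ M'`): it is closed under adjoints and,
`M` being a factor, its commutant is `M ∩ M' = ℂ`. The projection onto the closed span of the tuples
`(A v₁, …, A vₙ)`, `A ∈ S`, commutes with the diagonal action of `S` on `Hⁿ`, so its matrix entries
are scalars and it commutes with `T ⊕ ⋯ ⊕ T` for every `T`; hence `(T v₁, …, T vₙ)` lies in that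
span. Consequently an identity `∑ aᵢ * A * bᵢ = 0` valid for `A ∈ S` holds for all `A ∈ B(H)`, and
rank-one operators then show: `0 ≠ x ∈ M'`, `y ∈ M`, `x * y = 0` force `y = 0`, and
`t * b * s = s * b * t` for all `b ∈ M'` with `t ≠ 0` forces `s ∈ ℂ t`.

Given a shortest relation `∑ xᵢ * yᵢ = 0` with `xᵢ ∈ M'`, `yᵢ ∈ M` linearly independent and
`x_k ≠ 0`, the relation `∑ (x_k * b * xᵢ - xᵢ * b * x_k) * yᵢ = 0` (`b ∈ M'`) has no `k`-th term,
so `x_k * b * xᵢ = xᵢ * b * x_k` and `xᵢ = cᵢ x_k`. Then `x_k * ∑ cᵢ yᵢ = 0` gives `∑ cᵢ yᵢ = 0`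
with `c_k = 1`, contradicting linear independence.
-/

open scoped InnerProductSpace TensorProduct
open ContinuousLinearMap InnerProductSpace Module.End Submodule

theorem Submodule.topologicalClosure_span_mem_invtSubmodule {R E : Type*} [Semiring R]
    [AddCommMonoid E] [Module R E] [TopologicalSpace E] [ContinuousAdd E]
    [ContinuousConstSMul R E] {X : Set E} {T : E →L[R] E} (hX : Set.MapsTo T X X) :
    (span R X).topologicalClosure ∈ invtSubmodule T.toLinearMap := by
  rw [mem_invtSubmodule]
  refine topologicalClosure_minimal _ ?_ ((isClosed_topologicalClosure _).preimage T.continuous)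
  rw [span_le]
  exact fun x hx => le_topologicalClosure _ (subset_span (hX hx))

theorem Finset.sum_mul_sub_mul_mul_of_commute {R ι : Type*} [Ring R] (s : Finset ι) (a c : R)
    (x y : ι → R) (hc : ∀ j ∈ s, Commute c (y j)) :
    ∑ j ∈ s, (a * x j - x j * c) * y j = a * ∑ j ∈ s, x j * y j - (∑ j ∈ s, x j * y j) * c := by
  rw [Finset.mul_sum, Finset.sum_mul, ← Finset.sum_sub_distrib]
  refine Finset.sum_congr rfl fun j hj => ?_
  rw [sub_mul, mul_assoc, mul_assoc, (hc j hj).eq, mul_assoc]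

section HilbertSpace

variable {𝕜 H : Type*} [RCLike 𝕜] [NormedAddCommGroup H] [InnerProductSpace 𝕜 H]

theorem Submodule.commute_starProjection [CompleteSpace H] {K : Submodule 𝕜 H}
    [K.HasOrthogonalProjection] {T : H →L[𝕜] H} (hT : K ∈ invtSubmodule T.toLinearMap)
    (hT' : K ∈ invtSubmodule (adjoint T).toLinearMap) : Commute K.starProjection T := by
  have h := (LinearMap.IsIdempotentElem.commute_iff (T := T.toLinearMap)
    K.isIdempotentElem_starProjection.toLinearMap).mpr
    ⟨by rwa [range_starProjection],
      by rw [ker_starProjection]; exact orthogonal_mem_invtSubmodule hT'⟩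
  exact coe_injective (by simpa using h.eq)

namespace ContinuousLinearMap

theorem eq_zero_of_forall_mul_mul_eq_zero {x y : H →L[𝕜] H} (hx : x ≠ 0)
    (h : ∀ T, x * T * y = 0) : y = 0 := by
  obtain ⟨u, hu⟩ : ∃ u, x u ≠ 0 := DFunLike.ne_iff.mp hx
  ext ζ
  have := congr($(h (rankOne 𝕜 u (y ζ))) ζ)
  simp only [mul_apply_eq_comp, rankOne_apply, map_smul, zero_apply] at this
  simpa [hu] using this

theorem exists_eq_smul_of_forall_mul_mul_comm {t s : H →L[𝕜] H} (ht : t ≠ 0)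
    (h : ∀ T, t * T * s = s * T * t) : ∃ c : 𝕜, s = c • t := by
  obtain ⟨ζ₀, hζ₀⟩ := DFunLike.ne_iff.mp ht
  have hnorm : ⟪t ζ₀, t ζ₀⟫_𝕜 ≠ 0 := inner_self_ne_zero.mpr hζ₀
  refine ⟨⟪t ζ₀, s ζ₀⟫_𝕜 / ⟪t ζ₀, t ζ₀⟫_𝕜, ext fun ζ => ?_⟩
  have := congr($(h (rankOne 𝕜 ζ (t ζ₀))) ζ₀)
  simp only [mul_apply_eq_comp, rankOne_apply, map_smul] at this
  rw [smul_apply, div_eq_inv_mul, mul_smul, this, inv_smul_smul₀ hnorm]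

variable {ι : Type*}

noncomputable def diagPiLp (T : H →L[𝕜] H) :
    PiLp 2 (fun _ : ι => H) →L[𝕜] PiLp 2 (fun _ : ι => H) :=
  (PiLp.continuousLinearEquiv 2 𝕜 _).symm.toContinuousLinearMap ∘L
    piMap (fun _ => T) ∘L (PiLp.continuousLinearEquiv 2 𝕜 _).toContinuousLinearMap

@[simp]
theorem diagPiLp_apply (T : H →L[𝕜] H) (z : PiLp 2 (fun _ : ι => H)) (i : ι) :
    T.diagPiLp z i = T (z i) :=
  rfl

variable [Fintype ι]

theorem adjoint_diagPiLp [CompleteSpace H] (T : H →L[𝕜] H) :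
    adjoint (T.diagPiLp (ι := ι)) = (adjoint T).diagPiLp := by
  refine ((eq_adjoint_iff _ _).mpr fun x y => ?_).symm
  simp [PiLp.inner_apply, adjoint_inner_left]

theorem commute_diagPiLp_of_centralizer {S : Set (H →L[𝕜] H)}
    (hS : ∀ x ∈ S.centralizer, ∃ c : 𝕜, x = c • 1)
    {P : PiLp 2 (fun _ : ι => H) →L[𝕜] PiLp 2 (fun _ : ι => H)}
    (hP : ∀ g ∈ S, Commute P g.diagPiLp) (T : H →L[𝕜] H) : Commute P T.diagPiLp := by
  classical
  let single (j : ι) : H →L[𝕜] PiLp 2 (fun _ : ι => H) :=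
    (PiLp.continuousLinearEquiv 2 𝕜 _).symm.toContinuousLinearMap ∘L
      ContinuousLinearMap.single 𝕜 (fun _ => H) j
  have hentry (i j : ι) : ∃ c : 𝕜, ∀ u, P (single j u) i = c • u := by
    obtain ⟨c, hc⟩ := hS (PiLp.proj 2 (fun _ : ι => H) i ∘L P ∘L single j) fun g hg => by
      have hsingle (u : H) : g.diagPiLp (single j u) = single j (g u) := by
        ext k
        by_cases hk : k = j
        · subst hk; simp [single]
        · simp [single, hk]
      ext u
      simpa [hsingle] using congr($((hP g hg).eq) (single j u) i).symm
    exact ⟨c, fun u => by simpa using congr($hc u)⟩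
  choose c hc using hentry
  have hPc (z : PiLp 2 (fun _ : ι => H)) (i : ι) : P z i = ∑ j, c i j • z j := by
    have hz : z = ∑ j, single j (z j) := by
      ext k
      simp [single]
    conv_lhs => rw [hz]
    simp [map_sum, hc]
  ext z i
  simp [hPc, map_sum, map_smul]

end ContinuousLinearMap

namespace Submonoid

variable [CompleteSpace H] {ι : Type*} [Fintype ι] {S : Submonoid (H →L[𝕜] H)}

theorem toLp_comp_mem_topologicalClosure_span (hS_star : ∀ g ∈ S, star g ∈ S)
    (hS : ∀ x ∈ (S : Set (H →L[𝕜] H)).centralizer, ∃ c : 𝕜, x = c • 1)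
    (v : ι → H) (T : H →L[𝕜] H) :
    WithLp.toLp 2 (T ∘ v) ∈
      (span 𝕜 ((fun A : H →L[𝕜] H => WithLp.toLp 2 (A ∘ v)) '' S)).topologicalClosure := by
  set K := (span 𝕜 ((fun A : H →L[𝕜] H => WithLp.toLp 2 (A ∘ v)) '' S)).topologicalClosure
  have hinv (g) (hg : g ∈ S) : K ∈ invtSubmodule g.diagPiLp.toLinearMap := by
    refine Submodule.topologicalClosure_span_mem_invtSubmodule ?_
    rintro _ ⟨A, hA, rfl⟩
    exact ⟨g * A, S.mul_mem hg hA, rfl⟩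
  have hcomm (g) (hg : g ∈ S) : Commute K.starProjection g.diagPiLp := by
    refine K.commute_starProjection (hinv g hg) ?_
    rw [adjoint_diagPiLp, ← star_eq_adjoint]
    exact hinv _ (hS_star g hg)
  have hv : WithLp.toLp 2 v ∈ K := Submodule.le_topologicalClosure _ <| subset_span <|
    show WithLp.toLp 2 v ∈ (fun A : H →L[𝕜] H => WithLp.toLp 2 (A ∘ v)) '' S from
      ⟨1, S.one_mem, rfl⟩
  have hTv : T.diagPiLp (WithLp.toLp 2 v) = WithLp.toLp 2 (T ∘ v) := rfl
  rw [← hTv, ← K.starProjection_eq_self_iff.mpr hv, ← mul_apply_eq_comp,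
    ← (commute_diagPiLp_of_centralizer hS hcomm T).eq, mul_apply_eq_comp]
  exact K.starProjection_apply_mem _

theorem sum_mul_mul_eq_zero_of_forall_mem (hS_star : ∀ g ∈ S, star g ∈ S)
    (hS : ∀ x ∈ (S : Set (H →L[𝕜] H)).centralizer, ∃ c : 𝕜, x = c • 1)
    (a b : ι → H →L[𝕜] H) (h : ∀ A ∈ S, ∑ i, a i * A * b i = 0) (T : H →L[𝕜] H) :
    ∑ i, a i * T * b i = 0 := by
  ext ξ
  let Ψ : PiLp 2 (fun _ : ι => H) →L[𝕜] H := ∑ i, a i ∘L PiLp.proj 2 (fun _ : ι => H) i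
  have hΨ (A : H →L[𝕜] H) :
      Ψ (WithLp.toLp 2 (A ∘ fun i => b i ξ)) = (∑ i, a i * A * b i) ξ := by
    simp [Ψ]
  have hker : (span 𝕜 ((fun A : H →L[𝕜] H => WithLp.toLp 2 (A ∘ fun i => b i ξ)) '' S)
      ).topologicalClosure ≤ LinearMap.ker (Ψ : PiLp 2 (fun _ : ι => H) →ₗ[𝕜] H) := by
    refine Submodule.topologicalClosure_minimal _ (span_le.mpr ?_) Ψ.isClosed_ker
    rintro _ ⟨A, hA, rfl⟩
    simp [hΨ, h A hA]
  simpa [hΨ] using hker (toLp_comp_mem_topologicalClosure_span hS_star hS _ T)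

end Submonoid

end HilbertSpace

namespace VonNeumannAlgebra

variable {H : Type*} [NormedAddCommGroup H] [InnerProductSpace ℂ H] [CompleteSpace H]
  (M : VonNeumannAlgebra H)

def IsFactor : Prop :=
  ∀ x : H →L[ℂ] H, x ∈ M → x ∈ M.commutant → ∃ c : ℂ, x = c • (1 : H →L[ℂ] H)

def mulCommutant : Submonoid (H →L[ℂ] H) where
  carrier := {x | ∃ m ∈ M, ∃ m' ∈ M.commutant, m * m' = x}
  mul_mem' := by
    rintro _ _ ⟨m₁, hm₁, m₁', hm₁', rfl⟩ ⟨m₂, hm₂, m₂', hm₂', rfl⟩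
    refine ⟨m₁ * m₂, mul_mem hm₁ hm₂, m₁' * m₂', mul_mem hm₁' hm₂', ?_⟩
    rw [mul_assoc, ← mul_assoc m₂, mem_commutant_iff.mp hm₁' m₂ hm₂]
    simp only [mul_assoc]
  one_mem' := ⟨1, one_mem _, 1, one_mem _, one_mul 1⟩

variable {M}

theorem commute_of_mem_commutant {g z : H →L[ℂ] H} (hg : g ∈ M) (hz : z ∈ M.commutant) :
    Commute g z :=
  mem_commutant_iff.mp hz g hg

theorem star_mem_mulCommutant {x : H →L[ℂ] H} (hx : x ∈ M.mulCommutant) :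
    star x ∈ M.mulCommutant := by
  obtain ⟨m, hm, m', hm', rfl⟩ := hx
  refine ⟨star m, star_mem hm, star m', star_mem hm', ?_⟩
  rw [star_mul, (commute_of_mem_commutant (star_mem hm) (star_mem hm')).eq]

theorem IsFactor.centralizer_mulCommutant (hM : M.IsFactor) :
    ∀ x ∈ (M.mulCommutant : Set (H →L[ℂ] H)).centralizer, ∃ c : ℂ, x = c • 1 := by
  intro x hx
  refine hM x ?_ ?_
  · rw [← commutant_commutant M, mem_commutant_iff]
    exact fun g hg => by simpa using hx g ⟨1, one_mem _, g, hg, one_mul g⟩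
  · rw [mem_commutant_iff]
    exact fun g hg => by simpa using hx g ⟨g, hg, 1, one_mem _, mul_one g⟩

theorem IsFactor.eq_zero_of_mul_eq_zero (hM : M.IsFactor) {x y : H →L[ℂ] H}
    (hx : x ∈ M.commutant) (hy : y ∈ M) (hxy : x * y = 0) (hx0 : x ≠ 0) : y = 0 := by
  refine eq_zero_of_forall_mul_mul_eq_zero hx0 fun T => ?_
  have hA : ∀ A ∈ M.mulCommutant, x * A * y = 0 := by
    rintro _ ⟨m, hm, m', hm', rfl⟩
    calc x * (m * m') * y = (x * m) * (m' * y) := by simp only [mul_assoc]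
      _ = (m * x) * (y * m') := by
        rw [(commute_of_mem_commutant hm hx).eq, (commute_of_mem_commutant hy hm').eq]
      _ = 0 := by simp [mul_assoc, ← mul_assoc x, hxy]
  simpa using M.mulCommutant.sum_mul_mul_eq_zero_of_forall_mem (ι := Unit)
    (fun _ => star_mem_mulCommutant) hM.centralizer_mulCommutant (fun _ => x) (fun _ => y)
    (by simpa using hA) T

theorem IsFactor.exists_eq_smul_of_mul_mul_comm (hM : M.IsFactor) {t s : H →L[ℂ] H}
    (ht : t ∈ M.commutant) (hs : s ∈ M.commutant) (ht0 : t ≠ 0)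
    (h : ∀ b ∈ M.commutant, t * b * s = s * b * t) : ∃ c : ℂ, s = c • t := by
  refine exists_eq_smul_of_forall_mul_mul_comm ht0 fun T => ?_
  have hA : ∀ A ∈ M.mulCommutant, t * A * s = s * A * t := by
    rintro _ ⟨m, hm, m', hm', rfl⟩
    calc t * (m * m') * s = m * (t * m' * s) := by
          rw [← mul_assoc, ← (commute_of_mem_commutant hm ht).eq]; simp only [mul_assoc]
      _ = m * (s * m' * t) := by rw [h m' hm']
      _ = s * (m * m') * t := by
          rw [← mul_assoc m, ← mul_assoc m, (commute_of_mem_commutant hm hs).eq]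
          simp only [mul_assoc]
  have := M.mulCommutant.sum_mul_mul_eq_zero_of_forall_mem (ι := Fin 2)
    (fun _ => star_mem_mulCommutant) hM.centralizer_mulCommutant ![t, -s] ![s, t]
    (fun A hA' => by simp [Fin.sum_univ_two, hA A hA']) T
  simpa [Fin.sum_univ_two, add_neg_eq_zero] using this

theorem IsFactor.eq_zero_of_sum_mul_eq_zero (hM : M.IsFactor) {ι : Type*}
    {y : ι → H →L[ℂ] H} (hy : LinearIndependent ℂ y) (hyM : ∀ i, y i ∈ M) (s : Finset ι)
    {x : ι → H →L[ℂ] H} (hx : ∀ i, x i ∈ M.commutant) (h : ∑ i ∈ s, x i * y i = 0) :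
    ∀ k ∈ s, x k = 0 := by
  classical
  induction s using Finset.strongInduction generalizing x with
  | H s ih =>
  intro k hk
  by_contra hxk
  have hcomm : ∀ b ∈ M.commutant, ∀ i ∈ s, x k * b * x i = x i * b * x k := by
    intro b hb i hi
    rcases eq_or_ne i k with rfl | hik
    · rfl
    have hrel : ∑ j ∈ s.erase k, (x k * b * x j - x j * (b * x k)) * y j = 0 := by
      rw [Finset.sum_erase _ (by simp [mul_assoc]), Finset.sum_mul_sub_mul_mul_of_commute, h,
        mul_zero, zero_mul, sub_zero]
      exact fun j _ => ((commute_of_mem_commutant (hyM j) hb).mul_right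
        (commute_of_mem_commutant (hyM j) (hx k))).symm
    refine sub_eq_zero.mp ?_
    simp only [← mul_assoc] at hrel
    refine ih _ (s.erase_ssubset hk) (fun j => ?_) hrel i (Finset.mem_erase.mpr ⟨hik, hi⟩)
    exact sub_mem (mul_mem (mul_mem (hx k) hb) (hx j)) (mul_mem (mul_mem (hx j) hb) (hx k))
  choose! c hc using fun i hi =>
    hM.exists_eq_smul_of_mul_mul_comm (hx k) (hx i) hxk fun b hb => hcomm b hb i hi
  have hy0 : ∑ i ∈ s, c i • y i = 0 := by
    refine hM.eq_zero_of_mul_eq_zero (hx k) (sum_mem fun i _ => ?_) ?_ hxk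
    · exact M.toStarSubalgebra.smul_mem (hyM i) (c i)
    · rw [Finset.mul_sum, ← h]
      exact Finset.sum_congr rfl fun i hi => by rw [hc i hi, mul_smul_comm, smul_mul_assoc]
  have hck : c k = 1 := smul_left_injective ℂ hxk (by simpa using (hc k hk).symm)
  simpa [hck] using linearIndependent_iff'.mp hy s c hy0 k hk

end VonNeumannAlgebra

/-- If `M ⊆ B(H)` is a factor (a von Neumann algebra with `M ∩ M' = ℂ·1`), then the
multiplication map `M' ⊙ M → B(H)`, `a ⊗ b ↦ a·b`, on the algebraic tensor product is
injective. -/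
theorem stmt_9 {H : Type*} [NormedAddCommGroup H] [InnerProductSpace ℂ H]
    [CompleteSpace H]
    (M : VonNeumannAlgebra H)
    (hfactor : ∀ x : H →L[ℂ] H, x ∈ M → x ∈ M.commutant →
      ∃ c : ℂ, x = c • (1 : H →L[ℂ] H))
    (μ : (↥(VonNeumannAlgebra.commutant M).toStarSubalgebra ⊗[ℂ]
          ↥M.toStarSubalgebra) →ₗ[ℂ] (H →L[ℂ] H))
    (hμ : ∀ (a : (VonNeumannAlgebra.commutant M).toStarSubalgebra)
            (b : M.toStarSubalgebra),
      μ (a ⊗ₜ[ℂ] b) = (a : H →L[ℂ] H) * (b : H →L[ℂ] H)) :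
    Function.Injective μ := by
  classical
  refine (injective_iff_map_eq_zero μ).mpr fun τ hτ => ?_
  let 𝒞 := Module.Basis.ofVectorSpace ℂ M.toStarSubalgebra
  obtain ⟨b, rfl⟩ := TensorProduct.eq_repr_basis_right 𝒞 τ
  have hsum : ∑ i ∈ b.support, (b i : H →L[ℂ] H) * (𝒞 i : H →L[ℂ] H) = 0 := by
    simpa [Finsupp.sum, map_sum, hμ] using hτ
  have hli : LinearIndependent ℂ fun i => (𝒞 i : H →L[ℂ] H) :=
    𝒞.linearIndependent.map' M.toStarSubalgebra.toSubalgebra.toSubmodule.subtype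
      (Submodule.ker_subtype _)
  have hM : M.IsFactor := hfactor
  have hb := hM.eq_zero_of_sum_mul_eq_zero hli (fun i => (𝒞 i).2) b.support (fun i => (b i).2) hsum
  have : b = 0 := by
    refine Finsupp.ext fun i => ?_
    by_cases hi : i ∈ b.support
    · exact_mod_cast hb i hi
    · exact Finsupp.notMem_support_iff.mp hi
  simp [this]
end
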